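/- arXiv:1610.10031 — 2 statements merged into one kernel-verified Lean document; each statement's English description precedes it below -/
import Mathlib

section
/- Let L ≥ 1, M ≥ 1 be integers and let H : ℝ^L → ℝ^L be β-Lipschitz with respect to the sup norm ‖·‖∞. On a probability space with filtration (F_n), let (v_n) be an (F_n)-martingale difference sequence in ℝ^L (v_n is F_{n+1}-measurable with E[v_n | F_n] = 0) satisfying the coordinatewise bound |v_n(i)| ≤ √Γ / M almost surely for every coordinate i and some constant Γ > 0. Define the stochastic process x_{n+1} = x_n + (1/M) H(x_n) + v_n and the deterministic mean field process x̄_{n+1} = x̄_n + (1/M) H(x̄_n) with the same initial condition x̄_0 = x_0. Then for every constant c₁ > 0 there exist positive constants C₁ and C₂, depending only on β, Γ, c₁ and L, such that for the horizon N = ⌈c₁ M⌉ and every ε > 0: P( max_{0 ≤ n ≤ N} ‖x̄_n − x_n‖∞ ≥ ε ) ≤ C₁ exp(−C₂ ε² M). -/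
/-!
The noise telescopes out of the recursion for `x̄ n - x n + ∑ j < n, v j`, which involves only
the drift; a discrete Gronwall argument then bounds `‖x̄ n - x n‖` by `exp (β n / M)` times the
largest partial sum of the noise up to time `n`, and `exp (β n / M) ≤ exp (β (c₁ + 1))` on the
horizon. Each coordinate `w` of the noise is a bounded martingale difference sequence, so
`E[exp (l w n) | ℱ n] ≤ cosh (l b) ≤ exp ((l b) ^ 2 / 2)` by convexity, and `exp (l S_k)` of its
partial sums is a submartingale. Doob's maximal inequality turns this into the maximal
Azuma–Hoeffding bound `P(max_{k ≤ N} |S_k| ≥ a) ≤ 2 exp (-a ^ 2 / (2 N b ^ 2))`, and a union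
bound over the `L` coordinates finishes the proof.
-/

open MeasureTheory Finset Real
open scoped ENNReal

lemma exp_mul_le_cosh_add_sinh_div_mul (t : ℝ) {b w : ℝ} (hb : 0 < b) (hw : |w| ≤ b) :
    exp (t * w) ≤ cosh (t * b) + sinh (t * b) / b * w := by
  obtain ⟨hw₁, hw₂⟩ := abs_le.mp hw
  have hcvx := convexOn_exp.2 (Set.mem_univ (t * -b)) (Set.mem_univ (t * b))
    (div_nonneg (by linarith) (by linarith) : 0 ≤ (b - w) / (2 * b))
    (div_nonneg (by linarith) (by linarith) : 0 ≤ (b + w) / (2 * b))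
    (by field_simp; ring)
  simp only [smul_eq_mul] at hcvx
  have harg : (b - w) / (2 * b) * (t * -b) + (b + w) / (2 * b) * (t * b) = t * w := by
    field_simp; ring
  rw [harg] at hcvx
  refine hcvx.trans_eq ?_
  rw [cosh_eq, sinh_eq, mul_neg, exp_neg]
  field_simp
  ring

structure IsBoundedMartingaleDiff {Ω : Type*} {m0 : MeasurableSpace Ω} (ℱ : Filtration ℕ m0)
    (μ : Measure Ω) (w : ℕ → Ω → ℝ) (b : ℝ) : Prop where
  stronglyMeasurable : ∀ n, StronglyMeasurable[ℱ (n + 1)] (w n)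
  condExp_eq_zero : ∀ n, μ[w n | ℱ n] =ᵐ[μ] 0
  abs_le : ∀ n, ∀ᵐ ω ∂μ, |w n ω| ≤ b

noncomputable def expPartialSum {Ω : Type*} (l : ℝ) (w : ℕ → Ω → ℝ) (k : ℕ) (ω : Ω) : ℝ :=
  exp (l * ∑ j ∈ range k, w j ω)

lemma expPartialSum_succ {Ω : Type*} (l : ℝ) (w : ℕ → Ω → ℝ) (n : ℕ) :
    expPartialSum l w (n + 1) = expPartialSum l w n * fun ω => exp (l * w n ω) := by
  ext ω
  simp only [expPartialSum, sum_range_succ, mul_add, exp_add, Pi.mul_apply]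

lemma norm_exp_mul_le_of_abs_le {Ω : Type*} {m0 : MeasurableSpace Ω} {μ : Measure Ω}
    {s : Ω → ℝ} {c : ℝ} (hs : ∀ᵐ ω ∂μ, |s ω| ≤ c) (l : ℝ) :
    ∀ᵐ ω ∂μ, ‖exp (l * s ω)‖ ≤ exp (|l| * c) := by
  filter_upwards [hs] with ω hω
  rw [norm_of_nonneg (exp_pos _).le, exp_le_exp]
  calc l * s ω ≤ |l * s ω| := le_abs_self _
    _ ≤ |l| * c := by rw [abs_mul]; gcongr

namespace IsBoundedMartingaleDiff

variable {Ω : Type*} {m0 : MeasurableSpace Ω} {μ : Measure Ω} {ℱ : Filtration ℕ m0}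
  {w : ℕ → Ω → ℝ} {b : ℝ}

lemma neg (hw : IsBoundedMartingaleDiff ℱ μ w b) : IsBoundedMartingaleDiff ℱ μ (-w) b where
  stronglyMeasurable n := (hw.stronglyMeasurable n).neg
  condExp_eq_zero n := (condExp_neg (w n) (ℱ n)).trans <| by
    filter_upwards [hw.condExp_eq_zero n] with ω hω
    simp [hω]
  abs_le n := by simpa only [Pi.neg_apply, abs_neg] using hw.abs_le n

lemma stronglyMeasurable_sum (hw : IsBoundedMartingaleDiff ℱ μ w b) (k : ℕ) :
    StronglyMeasurable[ℱ k] fun ω => ∑ j ∈ range k, w j ω :=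
  Finset.stronglyMeasurable_fun_sum _ fun j hj =>
    (hw.stronglyMeasurable j).mono (ℱ.mono (mem_range.mp hj))

lemma abs_sum_le (hw : IsBoundedMartingaleDiff ℱ μ w b) (k : ℕ) :
    ∀ᵐ ω ∂μ, |∑ j ∈ range k, w j ω| ≤ k * b := by
  filter_upwards [ae_all_iff.2 hw.abs_le] with ω hω
  calc |∑ j ∈ range k, w j ω| ≤ ∑ j ∈ range k, |w j ω| := abs_sum_le_sum_abs _ _
    _ ≤ k * b := (sum_le_sum fun j _ => hω j).trans_eq (by simp)

lemma stronglyAdapted_expPartialSum (hw : IsBoundedMartingaleDiff ℱ μ w b) (l : ℝ) :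
    StronglyAdapted ℱ (expPartialSum l w) := fun k =>
  continuous_exp.comp_stronglyMeasurable ((hw.stronglyMeasurable_sum k).const_mul l)

lemma norm_expPartialSum_le (hw : IsBoundedMartingaleDiff ℱ μ w b) (l : ℝ) (k : ℕ) :
    ∀ᵐ ω ∂μ, ‖expPartialSum l w k ω‖ ≤ exp (|l| * (k * b)) :=
  norm_exp_mul_le_of_abs_le (hw.abs_sum_le k) l

section FiniteMeasure

variable [IsFiniteMeasure μ]

lemma integrable (hw : IsBoundedMartingaleDiff ℱ μ w b) (n : ℕ) : Integrable (w n) μ :=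
  .of_bound ((hw.stronglyMeasurable n).mono (ℱ.le _)).aestronglyMeasurable b
    (by simpa only [norm_eq_abs] using hw.abs_le n)

lemma integrable_exp_mul (hw : IsBoundedMartingaleDiff ℱ μ w b) (l : ℝ) (n : ℕ) :
    Integrable (fun ω => exp (l * w n ω)) μ :=
  .of_bound (continuous_exp.comp_stronglyMeasurable
      (((hw.stronglyMeasurable n).mono (ℱ.le _)).const_mul l)).aestronglyMeasurable _
    (norm_exp_mul_le_of_abs_le (hw.abs_le n) l)

lemma condExp_const_add_mul (hw : IsBoundedMartingaleDiff ℱ μ w b) (c d : ℝ) (n : ℕ) :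
    μ[fun ω => c + d * w n ω | ℱ n] =ᵐ[μ] fun _ => c := by
  have hsplit : (fun ω => c + d * w n ω) = (fun _ => c) + d • w n := rfl
  rw [hsplit]
  filter_upwards [condExp_add (integrable_const c) ((hw.integrable n).smul d) (ℱ n),
    condExp_smul (μ := μ) d (w n) (ℱ n), hw.condExp_eq_zero n] with ω hadd hsmul hzero
  simp [hadd, hsmul, hzero, condExp_const (ℱ.le n)]

lemma one_le_condExp_exp_mul (hw : IsBoundedMartingaleDiff ℱ μ w b) (l : ℝ) (n : ℕ) :
    ∀ᵐ ω ∂μ, 1 ≤ μ[fun ω => exp (l * w n ω) | ℱ n] ω := by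
  filter_upwards [hw.condExp_const_add_mul 1 l n,
    condExp_mono (m := ℱ n) ((integrable_const 1).add ((hw.integrable n).const_mul l))
      (hw.integrable_exp_mul l n)
      (.of_forall fun ω => by simpa [add_comm] using add_one_le_exp (l * w n ω))]
    with ω haffine hmono
  exact haffine ▸ hmono

lemma condExp_exp_mul_le_cosh (hw : IsBoundedMartingaleDiff ℱ μ w b) (hb : 0 < b) (l : ℝ)
    (n : ℕ) : ∀ᵐ ω ∂μ, μ[fun ω => exp (l * w n ω) | ℱ n] ω ≤ cosh (l * b) := by
  filter_upwards [hw.condExp_const_add_mul (cosh (l * b)) (sinh (l * b) / b) n,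
    condExp_mono (m := ℱ n) (hw.integrable_exp_mul l n)
      ((integrable_const _).add ((hw.integrable n).const_mul _))
      (by filter_upwards [hw.abs_le n] with ω hω
          exact exp_mul_le_cosh_add_sinh_div_mul l hb hω)]
    with ω haffine hmono
  exact haffine ▸ hmono

lemma integrable_expPartialSum (hw : IsBoundedMartingaleDiff ℱ μ w b) (l : ℝ) (k : ℕ) :
    Integrable (expPartialSum l w k) μ :=
  .of_bound ((hw.stronglyAdapted_expPartialSum l k).mono (ℱ.le k)).aestronglyMeasurable _
    (hw.norm_expPartialSum_le l k)

lemma condExp_expPartialSum_succ (hw : IsBoundedMartingaleDiff ℱ μ w b) (l : ℝ) (n : ℕ) :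
    μ[expPartialSum l w (n + 1) | ℱ n] =ᵐ[μ]
      expPartialSum l w n * μ[fun ω => exp (l * w n ω) | ℱ n] := by
  rw [expPartialSum_succ]
  exact condExp_stronglyMeasurable_mul_of_bound (ℱ.le n) (hw.stronglyAdapted_expPartialSum l n)
    (hw.integrable_exp_mul l n) _ (hw.norm_expPartialSum_le l n)

lemma submartingale_expPartialSum (hw : IsBoundedMartingaleDiff ℱ μ w b) (l : ℝ) :
    Submartingale (expPartialSum l w) ℱ μ := by
  refine submartingale_nat (hw.stronglyAdapted_expPartialSum l) (hw.integrable_expPartialSum l)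
    fun n => ?_
  filter_upwards [hw.condExp_expPartialSum_succ l n, hw.one_le_condExp_exp_mul l n]
    with ω hsucc hone
  rw [hsucc, Pi.mul_apply]
  exact le_mul_of_one_le_right (exp_pos _).le hone

end FiniteMeasure

variable [IsProbabilityMeasure μ]

lemma integral_expPartialSum_le (hw : IsBoundedMartingaleDiff ℱ μ w b) (hb : 0 < b) (l : ℝ)
    (N : ℕ) : ∫ ω, expPartialSum l w N ω ∂μ ≤ cosh (l * b) ^ N := by
  induction N with
  | zero => simp [expPartialSum]
  | succ n ih =>
    have hcond := integrable_condExp (μ := μ) (m := ℱ n) (f := fun ω => exp (l * w n ω))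
    calc ∫ ω, expPartialSum l w (n + 1) ω ∂μ
        = ∫ ω, (expPartialSum l w n * μ[fun ω => exp (l * w n ω) | ℱ n]) ω ∂μ := by
          rw [← integral_condExp (ℱ.le n), integral_congr_ae (hw.condExp_expPartialSum_succ l n)]
      _ ≤ ∫ ω, cosh (l * b) * expPartialSum l w n ω ∂μ := by
          refine integral_mono_ae
            (hcond.bdd_mul
              ((hw.stronglyAdapted_expPartialSum l n).mono (ℱ.le n)).aestronglyMeasurable
              (hw.norm_expPartialSum_le l n))
            ((hw.integrable_expPartialSum l n).const_mul _) ?_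
          filter_upwards [hw.condExp_exp_mul_le_cosh hb l n] with ω hω
          rw [Pi.mul_apply, mul_comm]
          exact mul_le_mul_of_nonneg_right hω (exp_pos _).le
      _ ≤ cosh (l * b) ^ (n + 1) := by
          rw [integral_const_mul, pow_succ']
          exact mul_le_mul_of_nonneg_left ih (cosh_pos _).le

lemma measure_exists_le_sum_le_exp_mul_cosh_pow (hw : IsBoundedMartingaleDiff ℱ μ w b)
    (hb : 0 < b) {l : ℝ} (hl : 0 < l) (a : ℝ) (N : ℕ) :
    μ {ω | ∃ k ≤ N, a ≤ ∑ j ∈ range k, w j ω} ≤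
      ENNReal.ofReal (exp (-(l * a)) * cosh (l * b) ^ N) := by
  set A := {ω | exp (l * a) ≤ (range (N + 1)).sup' nonempty_range_add_one
    fun k => expPartialSum l w k ω}
  have hsub : {ω | ∃ k ≤ N, a ≤ ∑ j ∈ range k, w j ω} ⊆ A := by
    rintro ω ⟨k, hk, hak⟩
    exact (exp_le_exp.2 (mul_le_mul_of_nonneg_left hak hl.le)).trans
      (le_sup' (fun j => expPartialSum l w j ω) (mem_range.2 (Nat.lt_succ_of_le hk)))
  have hdoob : ENNReal.ofReal (exp (l * a)) * μ A ≤ ENNReal.ofReal (cosh (l * b) ^ N) := by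
    have hmax := maximal_ineq (hw.submartingale_expPartialSum l)
      (fun k ω => (exp_pos _).le) (ε := (exp (l * a)).toNNReal) N
    rw [Real.coe_toNNReal _ (exp_pos _).le] at hmax
    refine hmax.trans (ENNReal.ofReal_le_ofReal ?_)
    exact (setIntegral_le_integral (hw.integrable_expPartialSum l N)
      (.of_forall fun ω => (exp_pos _).le)).trans (hw.integral_expPartialSum_le hb l N)
  calc μ {ω | ∃ k ≤ N, a ≤ ∑ j ∈ range k, w j ω} ≤ μ A := measure_mono hsub
    _ = ENNReal.ofReal (exp (-(l * a))) * (ENNReal.ofReal (exp (l * a)) * μ A) := by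
        rw [← mul_assoc, ← ENNReal.ofReal_mul (exp_pos _).le, ← exp_add, neg_add_cancel,
          exp_zero, ENNReal.ofReal_one, one_mul]
    _ ≤ ENNReal.ofReal (exp (-(l * a))) * ENNReal.ofReal (cosh (l * b) ^ N) := by gcongr
    _ = ENNReal.ofReal (exp (-(l * a)) * cosh (l * b) ^ N) :=
        (ENNReal.ofReal_mul (exp_pos _).le).symm

lemma measure_exists_le_sum_le (hw : IsBoundedMartingaleDiff ℱ μ w b) (hb : 0 < b) {a : ℝ}
    (ha : 0 < a) {N : ℕ} (hN : 0 < N) :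
    μ {ω | ∃ k ≤ N, a ≤ ∑ j ∈ range k, w j ω} ≤
      ENNReal.ofReal (exp (-(a ^ 2 / (2 * N * b ^ 2)))) := by
  have hN' : (0 : ℝ) < N := Nat.cast_pos.2 hN
  -- the minimizer of `-l a + N (l b) ^ 2 / 2`
  set l := a / (N * b ^ 2)
  refine (hw.measure_exists_le_sum_le_exp_mul_cosh_pow hb (l := l) (by positivity) a N).trans
    (ENNReal.ofReal_le_ofReal ?_)
  calc exp (-(l * a)) * cosh (l * b) ^ N ≤ exp (-(l * a)) * exp ((l * b) ^ 2 / 2) ^ N := by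
        gcongr; exact cosh_le_exp_half_sq _
    _ = exp (-(a ^ 2 / (2 * N * b ^ 2))) := by
        rw [← exp_nat_mul, ← exp_add]
        congr 1
        simp only [l]
        field_simp
        ring

lemma measure_exists_le_abs_sum_le (hw : IsBoundedMartingaleDiff ℱ μ w b) (hb : 0 < b) {a : ℝ}
    (ha : 0 < a) {N : ℕ} (hN : 0 < N) :
    μ {ω | ∃ k ≤ N, a ≤ |∑ j ∈ range k, w j ω|} ≤
      ENNReal.ofReal (2 * exp (-(a ^ 2 / (2 * N * b ^ 2)))) := by
  have hsub : {ω | ∃ k ≤ N, a ≤ |∑ j ∈ range k, w j ω|} ⊆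
      {ω | ∃ k ≤ N, a ≤ ∑ j ∈ range k, w j ω} ∪
        {ω | ∃ k ≤ N, a ≤ ∑ j ∈ range k, (-w) j ω} := by
    rintro ω ⟨k, hk, hak⟩
    rcases le_abs'.mp hak with h | h
    · exact Or.inr ⟨k, hk, by simpa [sum_neg_distrib] using le_neg.mp h⟩
    · exact Or.inl ⟨k, hk, h⟩
  calc μ {ω | ∃ k ≤ N, a ≤ |∑ j ∈ range k, w j ω|}
      ≤ μ {ω | ∃ k ≤ N, a ≤ ∑ j ∈ range k, w j ω} +
          μ {ω | ∃ k ≤ N, a ≤ ∑ j ∈ range k, (-w) j ω} :=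
        (measure_mono hsub).trans (measure_union_le _ _)
    _ ≤ ENNReal.ofReal (exp (-(a ^ 2 / (2 * N * b ^ 2)))) +
          ENNReal.ofReal (exp (-(a ^ 2 / (2 * N * b ^ 2)))) :=
        add_le_add (hw.measure_exists_le_sum_le hb ha hN) (hw.neg.measure_exists_le_sum_le hb ha hN)
    _ = ENNReal.ofReal (2 * exp (-(a ^ 2 / (2 * N * b ^ 2)))) := by
        rw [← ENNReal.ofReal_add (exp_pos _).le (exp_pos _).le, ← two_mul]

end IsBoundedMartingaleDiff

lemma measure_exists_le_norm_sum_le {Ω ι : Type*} [Fintype ι] {m0 : MeasurableSpace Ω}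
    {μ : Measure Ω} [IsProbabilityMeasure μ] {ℱ : Filtration ℕ m0} {v : ℕ → Ω → ι → ℝ} {b : ℝ}
    (hv : ∀ i, IsBoundedMartingaleDiff ℱ μ (fun n ω => v n ω i) b) (hb : 0 < b) {a : ℝ}
    (ha : 0 < a) {N : ℕ} (hN : 0 < N) :
    μ {ω | ∃ k ≤ N, a ≤ ‖∑ j ∈ range k, v j ω‖} ≤
      ENNReal.ofReal (2 * Fintype.card ι * exp (-(a ^ 2 / (2 * N * b ^ 2)))) := by
  have hsub : {ω | ∃ k ≤ N, a ≤ ‖∑ j ∈ range k, v j ω‖} ⊆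
      ⋃ i, {ω | ∃ k ≤ N, a ≤ |∑ j ∈ range k, v j ω i|} := by
    rintro ω ⟨k, hk, hak⟩
    by_contra hnot
    simp only [Set.mem_iUnion, Set.mem_ofPred_eq, not_exists, not_and, not_le] at hnot
    refine hak.not_gt ((pi_norm_lt_iff ha).2 fun i => ?_)
    simpa [Finset.sum_apply] using hnot i k hk
  calc μ {ω | ∃ k ≤ N, a ≤ ‖∑ j ∈ range k, v j ω‖}
      ≤ ∑ i, μ {ω | ∃ k ≤ N, a ≤ |∑ j ∈ range k, v j ω i|} :=
        (measure_mono hsub).trans (measure_iUnion_fintype_le _ _)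
    _ ≤ ∑ _i : ι, ENNReal.ofReal (2 * exp (-(a ^ 2 / (2 * N * b ^ 2)))) :=
        sum_le_sum fun i _ => (hv i).measure_exists_le_abs_sum_le hb ha hN
    _ = ENNReal.ofReal (2 * Fintype.card ι * exp (-(a ^ 2 / (2 * N * b ^ 2)))) := by
        rw [sum_const, card_univ, nsmul_eq_mul, ← ENNReal.ofReal_natCast,
          ← ENNReal.ofReal_mul (Nat.cast_nonneg _)]
        ring_nf

lemma nonneg_of_norm_sub_le_mul {E F : Type*} [NormedAddCommGroup E] [Nontrivial E]
    [SeminormedAddCommGroup F] {f : E → F} {β : ℝ} (hf : ∀ y z, ‖f y - f z‖ ≤ β * ‖y - z‖) :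
    0 ≤ β := by
  obtain ⟨y, hy⟩ := exists_ne (0 : E)
  have hβy : 0 ≤ β * ‖y - 0‖ := (norm_nonneg _).trans (hf y 0)
  exact nonneg_of_mul_nonneg_left hβy (norm_pos_iff.2 (sub_ne_zero.2 hy))

section EulerScheme

variable {E : Type*} [SeminormedAddCommGroup E] [NormedSpace ℝ E] {F : E → E} {β h : ℝ}
  {u y v : ℕ → E}

lemma norm_sub_add_sum_add_le (hβ : 0 ≤ β) (hh : 0 ≤ h)
    (hF : ∀ p q, ‖F p - F q‖ ≤ β * ‖p - q‖) (hu : ∀ n, u (n + 1) = u n + h • F (u n))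
    (hy : ∀ n, y (n + 1) = y n + h • F (y n) + v n) (h0 : y 0 = u 0) {a : ℝ} (n : ℕ)
    (hS : ∀ k < n, ‖∑ j ∈ range k, v j‖ ≤ a) :
    ‖u n - y n + ∑ j ∈ range n, v j‖ + a ≤ exp (n * h * β) * a := by
  induction n with
  | zero => simp [h0]
  | succ n ih =>
    set z := u n - y n + ∑ j ∈ range n, v j
    have hSn := hS n n.lt_succ_self
    have hpos : 0 ≤ ‖z‖ + a := add_nonneg (norm_nonneg z) ((norm_nonneg _).trans hSn)
    have hstep : u (n + 1) - y (n + 1) + ∑ j ∈ range (n + 1), v j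
        = z + h • (F (u n) - F (y n)) := by
      rw [hu, hy, sum_range_succ, smul_sub]; simp only [z]; abel
    have herr : ‖u n - y n‖ ≤ ‖z‖ + a := by
      calc ‖u n - y n‖ = ‖z - ∑ j ∈ range n, v j‖ := by simp only [z, add_sub_cancel_right]
        _ ≤ ‖z‖ + a := (norm_sub_le _ _).trans (by gcongr)
    have hdrift : ‖h • (F (u n) - F (y n))‖ ≤ h * β * (‖z‖ + a) := by
      rw [norm_smul, norm_of_nonneg hh, mul_assoc]
      gcongr
      exact (hF _ _).trans (by gcongr)
    calc ‖u (n + 1) - y (n + 1) + ∑ j ∈ range (n + 1), v j‖ + a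
        ≤ (1 + h * β) * (‖z‖ + a) := by
          rw [hstep]; linarith [norm_add_le z (h • (F (u n) - F (y n)))]
      _ ≤ exp (h * β) * (exp (n * h * β) * a) := by
          gcongr
          · linarith [add_one_le_exp (h * β)]
          · exact ih fun k hk => hS k (hk.trans n.lt_succ_self)
      _ = exp ((n + 1 : ℕ) * h * β) * a := by
          rw [← mul_assoc, ← exp_add]; push_cast; ring_nf

lemma norm_sub_lt_exp_mul (hβ : 0 ≤ β) (hh : 0 ≤ h)
    (hF : ∀ p q, ‖F p - F q‖ ≤ β * ‖p - q‖) (hu : ∀ n, u (n + 1) = u n + h • F (u n))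
    (hy : ∀ n, y (n + 1) = y n + h • F (y n) + v n) (h0 : y 0 = u 0) {a : ℝ} (n : ℕ)
    (hS : ∀ k ≤ n, ‖∑ j ∈ range k, v j‖ < a) :
    ‖u n - y n‖ < exp (n * h * β) * a :=
  calc ‖u n - y n‖
      ≤ ‖u n - y n + ∑ j ∈ range n, v j‖ + ‖∑ j ∈ range n, v j‖ := by
        simpa using norm_sub_le (u n - y n + ∑ j ∈ range n, v j) (∑ j ∈ range n, v j)
    _ < ‖u n - y n + ∑ j ∈ range n, v j‖ + a := by gcongr; exact hS n le_rfl
    _ ≤ exp (n * h * β) * a :=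
        norm_sub_add_sum_add_le hβ hh hF hu hy h0 n fun k hk => (hS k hk.le).le

end EulerScheme

/-- **Mean field dynamics approximation (Theorem 1).**
For a β-Lipschitz (in sup norm) drift `H`, a martingale difference noise `v`
with coordinatewise almost-sure bound `√Γ / M`, the stochastic process
`x (n+1) = x n + (1/M) • H (x n) + v n` stays within `ε` of the deterministic
mean field trajectory `x̄ (n+1) = x̄ n + (1/M) • H (x̄ n)` (same initial condition)
for a horizon `N = ⌈c₁ M⌉` steps, except with probability at most
`C₁ exp (−C₂ ε² M)`, where `C₁, C₂ > 0` depend only on `β, Γ, c₁` (and `L`). -/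
theorem mean_field_dynamics_approximation
    (L : ℕ) (hL : 1 ≤ L) (β Γ : ℝ) (hΓ : 0 < Γ) (c₁ : ℝ) (hc₁ : 0 < c₁) :
    ∃ C₁ > (0 : ℝ), ∃ C₂ > (0 : ℝ),
      ∀ (M : ℕ), 1 ≤ M →
      ∀ (Ω : Type) (m0 : MeasurableSpace Ω) (μ : Measure Ω),
        IsProbabilityMeasure μ →
      ∀ (ℱ : Filtration ℕ m0)
        (v : ℕ → Ω → (Fin L → ℝ))
        (x : ℕ → Ω → (Fin L → ℝ))
        (xbar : ℕ → (Fin L → ℝ))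
        (H : (Fin L → ℝ) → (Fin L → ℝ)),
        -- H is β-Lipschitz w.r.t. the sup norm (the norm on `Fin L → ℝ`)
        (∀ y z : Fin L → ℝ, ‖H y - H z‖ ≤ β * ‖y - z‖) →
        -- martingale difference sequence: adaptedness, integrability,
        -- vanishing conditional expectation
        (∀ n, StronglyMeasurable[ℱ (n + 1)] (v n)) →
        (∀ n, Integrable (v n) μ) →
        (∀ n (i : Fin L), μ[(fun ω => v n ω i) | ℱ n] =ᵐ[μ] 0) →
        -- coordinatewise almost sure bound |v n ω i| ≤ √Γ / M
        (∀ n (i : Fin L), ∀ᵐ ω ∂μ, |v n ω i| ≤ Real.sqrt Γ / M) →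
        -- stochastic recursion
        (∀ n ω, x (n + 1) ω = x n ω + (1 / (M : ℝ)) • H (x n ω) + v n ω) →
        -- mean field recursion with the same initial condition
        (∀ ω, x 0 ω = xbar 0) →
        (∀ n, xbar (n + 1) = xbar n + (1 / (M : ℝ)) • H (xbar n)) →
        ∀ ε > (0 : ℝ),
          μ {ω | ∃ n ≤ ⌈c₁ * (M : ℝ)⌉₊, ε ≤ ‖xbar n - x n ω‖} ≤
            ENNReal.ofReal (C₁ * Real.exp (-C₂ * ε ^ 2 * M)) := by
  refine ⟨2 * L, by positivity, 1 / (2 * (c₁ + 1) * Γ * exp (β * (c₁ + 1)) ^ 2), by positivity, ?_⟩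
  intro M hM Ω m0 μ hμ ℱ v x xbar H hH hvm _ hvc hvb hxrec hx0 hxbarrec ε hε
  have : Nonempty (Fin L) := ⟨⟨0, hL⟩⟩
  have hβ : 0 ≤ β := nonneg_of_norm_sub_le_mul hH
  have hM1 : (1 : ℝ) ≤ M := by exact_mod_cast hM
  set N := ⌈c₁ * (M : ℝ)⌉₊
  have hN : 0 < N := Nat.ceil_pos.2 (by positivity)
  have hNle : (N : ℝ) ≤ (c₁ + 1) * M := by
    linarith [Nat.ceil_lt_add_one (by positivity : 0 ≤ c₁ * (M : ℝ))]
  set D := exp (β * (c₁ + 1))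
  have hD : 0 < D := exp_pos _
  have hv (i : Fin L) : IsBoundedMartingaleDiff ℱ μ (fun n ω => v n ω i) (√Γ / M) :=
    ⟨fun n => (continuous_apply i).comp_stronglyMeasurable (hvm n), (hvc · i), (hvb · i)⟩
  have hsub : {ω | ∃ n ≤ N, ε ≤ ‖xbar n - x n ω‖} ⊆
      {ω | ∃ k ≤ N, ε / D ≤ ‖∑ j ∈ range k, v j ω‖} := by
    rintro ω ⟨n, hn, hεn⟩
    by_contra hsmall
    simp only [Set.mem_ofPred_eq, not_exists, not_and, not_le] at hsmall
    have hclose := norm_sub_lt_exp_mul (y := fun n => x n ω) (v := fun n => v n ω) hβ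
      (by positivity) hH hxbarrec (hxrec · ω) (hx0 ω) n fun k hk => hsmall k (hk.trans hn)
    have hgrowth : n * (1 / M) * β ≤ β * (c₁ + 1) :=
      calc n * (1 / M) * β ≤ (c₁ + 1) * M * (1 / M) * β := by
            gcongr; exact (Nat.cast_le.2 hn).trans hNle
        _ = β * (c₁ + 1) := by field_simp
    refine hεn.not_gt (hclose.trans_le ?_)
    calc exp (n * (1 / M) * β) * (ε / D) ≤ D * (ε / D) := by gcongr; exact exp_le_exp.2 hgrowth
      _ = ε := by field_simp
  refine (measure_mono hsub).trans <|
    (measure_exists_le_norm_sum_le hv (by positivity) (by positivity) hN).trans <|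
      ENNReal.ofReal_le_ofReal ?_
  rw [Fintype.card_fin]
  gcongr
  rw [div_pow, div_pow, sq_sqrt hΓ.le, neg_mul, neg_mul, neg_le_neg_iff]
  calc 1 / (2 * (c₁ + 1) * Γ * D ^ 2) * ε ^ 2 * M
      = ε ^ 2 / D ^ 2 / (2 * ((c₁ + 1) * M) * (Γ / M ^ 2)) := by field_simp
    _ ≤ ε ^ 2 / D ^ 2 / (2 * N * (Γ / M ^ 2)) := by gcongr
end

section
/- Fix an integer N ≥ 1, parameters p₁, p₂ with 0 < p₂ < p₁ ≤ 1, and an integer k₀ with N(2−p₂)/k₀ ≤ 1. For each p ∈ {p₁, p₂} and any common initial probability vector ρ₀ on {1,…,N, N⁺}, define recursively ρ_q(p) = H_{k₀+q−1}(p)ᵀ ρ_{q−1}(p) for q = 1, 2, …, where H_k(p) is the preferential attachment transition matrix. Then for every q ≥ 1 the degree distribution is first-order stochastically decreasing in p: ρ_q(p₂) first-order stochastically dominates ρ_q(p₁), i.e. ρ_q(p₁) ≤_sd ρ_q(p₂). -/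
/-!
Write `T_j(ρ) = ∑_{i ≥ j} ρ i` for the tail masses. One step of `H_k(p)` only moves mass from a
state `j - 1` to `j`, with probability `r_j = j(2-p)/k ∈ [0, 1]`, so
`T_j(H_k(p)ᵀ ρ) = (1 - r_j) T_j(ρ) + r_j T_{j-1}(ρ)`. Being a convex combination of tails, this
preserves `≤_sd` (Lemma 8). For a fixed `ρ ≥ 0` we have `T_{j-1}(ρ) ≥ T_j(ρ)` and `r_j` decreases
in `p`, so `H_k(p₁)ᵀ ρ ≤_sd H_k(p₂)ᵀ ρ` (Lemma 9). Induction on `q`, chaining the two lemmas,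
gives the theorem.
-/

open Finset

/-- First-order stochastic dominance on distributions over `Fin X`
(states ordered by the `Fin` order): `ρ₁ ≤_sd ρ₂` iff every tail sum of `ρ₁`
is at most the corresponding tail sum of `ρ₂`. -/
def sdLE {X : ℕ} (ρ₁ ρ₂ : Fin X → ℝ) : Prop :=
  ∀ j : Fin X,
    ∑ i ∈ Finset.univ.filter (fun i => j ≤ i), ρ₁ i ≤
      ∑ i ∈ Finset.univ.filter (fun i => j ≤ i), ρ₂ i

/-- Preferential attachment transition matrix `H_k(p)` on the states
`{1, …, N, N⁺}` (encoded as `Fin (N+1)`, where index `i` stands for degree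
`i+1` and the last index `N` is the absorbing compound state `N⁺`):
`H_{i,i} = 1 − i(2−p)/k`, `H_{i,i+1} = i(2−p)/k` for degrees `i = 1, …, N`,
`H_{N⁺,N⁺} = 1`, and all other entries `0`. -/
noncomputable def Hmat (N k : ℕ) (p : ℝ) : Fin (N + 1) → Fin (N + 1) → ℝ :=
  fun i j =>
    if i.val = N then (if j = i then 1 else 0)
    else if j = i then 1 - ((i.val : ℝ) + 1) * (2 - p) / (k : ℝ)
    else if j.val = i.val + 1 then ((i.val : ℝ) + 1) * (2 - p) / (k : ℝ)
    else 0

open Matrix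

/-- The probability of leaving state `i` (of degree `i + 1`) in one step of `Hmat N k p`. -/
noncomputable def upRate (N k : ℕ) (p : ℝ) (i : Fin (N + 1)) : ℝ :=
  if i.val = N then 0 else ((i.val : ℝ) + 1) * (2 - p) / k

def tailSum {n : ℕ} (ρ : Fin n → ℝ) (j : Fin n) : ℝ :=
  ∑ i ∈ Ici j, ρ i

variable {N k : ℕ} {p : ℝ}

lemma upRate_nonneg (hp : p ≤ 2) (i : Fin (N + 1)) : 0 ≤ upRate N k p i := by
  unfold upRate
  split_ifs
  · rfl
  · have : 0 ≤ 2 - p := by linarith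
    positivity

lemma upRate_le_one (hp : p ≤ 2) (hNk : (N : ℝ) * (2 - p) / k ≤ 1) (i : Fin (N + 1)) :
    upRate N k p i ≤ 1 := by
  unfold upRate
  split_ifs with hi
  · exact zero_le_one
  · refine le_trans ?_ hNk
    have : (i.val : ℝ) + 1 ≤ N := by exact_mod_cast (show i.val + 1 ≤ N by omega)
    have : 0 ≤ 2 - p := by linarith
    gcongr

lemma upRate_antitone {p₁ p₂ : ℝ} (hp : p₂ ≤ p₁) (i : Fin (N + 1)) :
    upRate N k p₁ i ≤ upRate N k p₂ i := by
  unfold upRate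
  split_ifs
  · rfl
  · gcongr

lemma Hmat_apply (l i : Fin (N + 1)) :
    Hmat N k p l i = (if i = l then 1 - upRate N k p l else 0) +
      (if i.val = l.val + 1 then upRate N k p l else 0) := by
  have := i.isLt
  unfold Hmat upRate
  split_ifs <;> simp_all [Fin.ext_iff]

lemma tailSum_Hmat_row (l j : Fin (N + 1)) :
    tailSum (Hmat N k p l) j =
      (if j ≤ l then 1 else 0) + (if j.val = l.val + 1 then upRate N k p l else 0) := by
  simp only [tailSum, Hmat_apply, sum_add_distrib, sum_ite_eq', mem_Ici]
  by_cases hl : l.val = N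
  · simp [upRate, hl]
  · have hl' : l.val + 1 < N + 1 := by omega
    have hnext (i : Fin (N + 1)) : i.val = l.val + 1 ↔ i = ⟨l.val + 1, hl'⟩ := by
      simp [Fin.ext_iff]
    simp only [hnext, sum_ite_eq', mem_Ici]
    simp only [Fin.le_def, Fin.ext_iff]
    split_ifs <;> first | omega | ring

lemma tailSum_castSucc {n : ℕ} (ρ : Fin (n + 1) → ℝ) (j : Fin n) :
    tailSum ρ j.castSucc = ρ j.castSucc + tailSum ρ j.succ := by
  rw [tailSum, ← add_sum_Ioi_eq_sum_Ici, tailSum]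
  congr 2
  ext i
  simp [Fin.lt_def, Fin.le_def]

lemma tailSum_vecMul {n : ℕ} (ρ : Fin n → ℝ) (H : Matrix (Fin n) (Fin n) ℝ) (j : Fin n) :
    tailSum (ρ ᵥ* H) j = ∑ l, ρ l * tailSum (fun i => H l i) j := by
  simp only [tailSum, vecMul, dotProduct, mul_sum]
  exact sum_comm

lemma tailSum_vecMul_Hmat_zero (ρ : Fin (N + 1) → ℝ) :
    tailSum (ρ ᵥ* of (Hmat N k p)) 0 = tailSum ρ 0 := by
  rw [tailSum_vecMul]
  simp only [of_apply, tailSum_Hmat_row]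
  simp [tailSum]

lemma tailSum_vecMul_Hmat_succ (ρ : Fin (N + 1) → ℝ) (j : Fin N) :
    tailSum (ρ ᵥ* of (Hmat N k p)) j.succ =
      tailSum ρ j.succ + upRate N k p j.castSucc * ρ j.castSucc := by
  rw [tailSum_vecMul]
  have hprev (l : Fin (N + 1)) : j.succ.val = l.val + 1 ↔ l = j.castSucc := by
    simp [Fin.ext_iff, eq_comm]
  simp only [of_apply, tailSum_Hmat_row, hprev, mul_add, mul_ite, mul_one, mul_zero,
    sum_add_distrib, sum_ite_eq', mem_univ, if_true]
  rw [← sum_filter, filter_le_eq_Ici, tailSum, mul_comm]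

lemma Hmat_mem_rowStochastic (hp : p ≤ 2) (hNk : (N : ℝ) * (2 - p) / k ≤ 1) :
    of (Hmat N k p) ∈ rowStochastic ℝ (Fin (N + 1)) := by
  refine mem_rowStochastic_iff_sum.2 ⟨fun l i => ?_, fun l => ?_⟩
  · have := upRate_nonneg (k := k) hp l
    have := upRate_le_one hp hNk l
    rw [of_apply, Hmat_apply]
    split_ifs <;> linarith
  · simpa [tailSum] using tailSum_Hmat_row (k := k) (p := p) l 0

lemma sdLE_iff {n : ℕ} {ρ₁ ρ₂ : Fin n → ℝ} : sdLE ρ₁ ρ₂ ↔ ∀ j, tailSum ρ₁ j ≤ tailSum ρ₂ j := by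
  simp only [sdLE, tailSum, filter_le_eq_Ici]

lemma sdLE.refl {n : ℕ} (ρ : Fin n → ℝ) : sdLE ρ ρ := fun _ => le_rfl

lemma sdLE.trans {n : ℕ} {ρ₁ ρ₂ ρ₃ : Fin n → ℝ} (h₁₂ : sdLE ρ₁ ρ₂) (h₂₃ : sdLE ρ₂ ρ₃) :
    sdLE ρ₁ ρ₃ := fun j => (h₁₂ j).trans (h₂₃ j)

lemma sdLE.vecMul_Hmat {ρ₁ ρ₂ : Fin (N + 1) → ℝ} (h : sdLE ρ₁ ρ₂) (hp : p ≤ 2)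
    (hNk : (N : ℝ) * (2 - p) / k ≤ 1) :
    sdLE (ρ₁ ᵥ* of (Hmat N k p)) (ρ₂ ᵥ* of (Hmat N k p)) := by
  rw [sdLE_iff] at h ⊢
  intro j
  cases j using Fin.cases with
  | zero => simpa only [tailSum_vecMul_Hmat_zero] using h 0
  | succ j =>
    set r := upRate N k p j.castSucc
    have hmix (ρ : Fin (N + 1) → ℝ) : tailSum (ρ ᵥ* of (Hmat N k p)) j.succ =
        (1 - r) * tailSum ρ j.succ + r * tailSum ρ j.castSucc := by
      rw [tailSum_vecMul_Hmat_succ, tailSum_castSucc]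
      ring
    have : 0 ≤ r := upRate_nonneg hp _
    have : r ≤ 1 := upRate_le_one hp hNk _
    rw [hmix, hmix]
    gcongr <;> apply h

lemma vecMul_Hmat_sdLE_of_le {ρ : Fin (N + 1) → ℝ} (hρ : ∀ i, 0 ≤ ρ i) {p₁ p₂ : ℝ} (hp : p₂ ≤ p₁) :
    sdLE (ρ ᵥ* of (Hmat N k p₁)) (ρ ᵥ* of (Hmat N k p₂)) := by
  rw [sdLE_iff]
  intro j
  cases j using Fin.cases with
  | zero => rw [tailSum_vecMul_Hmat_zero, tailSum_vecMul_Hmat_zero]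
  | succ j =>
    rw [tailSum_vecMul_Hmat_succ, tailSum_vecMul_Hmat_succ]
    gcongr
    · exact hρ _
    · exact upRate_antitone hp _

theorem degree_distribution_stochastically_decreasing_in_p_general
    (N : ℕ) (p₁ p₂ : ℝ)
    (hpp : p₂ < p₁) (hp₁ : p₁ ≤ 1)
    (k₀ : ℕ) (hk₀ : 1 ≤ k₀) (hcond : (N : ℝ) * (2 - p₂) / (k₀ : ℝ) ≤ 1)
    (ρ₀ : Fin (N + 1) → ℝ) (hρ₀nn : ∀ i, 0 ≤ ρ₀ i)
    (ρseq : ℝ → ℕ → Fin (N + 1) → ℝ)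
    (hinit : ∀ p, ρseq p 0 = ρ₀)
    (hrec : ∀ p q, ρseq p (q + 1) =
      fun j => ∑ i, ρseq p q i * Hmat N (k₀ + q) p i j) :
    ∀ q : ℕ, 1 ≤ q → sdLE (ρseq p₁ q) (ρseq p₂ q) := by
  have hstep (p : ℝ) (q : ℕ) : ρseq p (q + 1) = ρseq p q ᵥ* of (Hmat N (k₀ + q) p) := hrec p q
  have hrate {p : ℝ} (hp : p₂ ≤ p) (q : ℕ) : (N : ℝ) * (2 - p) / (k₀ + q : ℕ) ≤ 1 := by
    refine le_trans ?_ hcond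
    have hp₂_le : (0 : ℝ) ≤ 2 - p₂ := by linarith
    exact div_le_div₀ (by positivity) (by gcongr) (by exact_mod_cast hk₀) (by simp)
  have hnonneg (q : ℕ) : ∀ i, 0 ≤ ρseq p₁ q i := by
    induction q with
    | zero => rw [hinit]; exact hρ₀nn
    | succ q ih =>
      rw [hstep]
      exact nonneg_vecMul_of_mem_rowStochastic
        (Hmat_mem_rowStochastic (by linarith) (hrate hpp.le q)) ih
  have hsd (q : ℕ) : sdLE (ρseq p₁ q) (ρseq p₂ q) := by
    induction q with
    | zero => rw [hinit, hinit]; exact sdLE.refl ρ₀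
    | succ q ih =>
      rw [hstep, hstep]
      exact (vecMul_Hmat_sdLE_of_le (hnonneg q) hpp.le).trans
        (ih.vecMul_Hmat (by linarith) (hrate le_rfl q))
  exact fun q _ => hsd q

/-- **Theorem 3, part 1 (cmp_gr).** In the preferential attachment model with
vertex-addition probability `p`, started from a common initial degree
distribution `ρ₀` and evolving by `ρ_q(p) = H_{k₀+q−1}(p)ᵀ ρ_{q−1}(p)`, the
degree distribution is first-order stochastically decreasing in `p`: for
`0 < p₂ < p₁ ≤ 1`, `ρ_q(p₁) ≤_sd ρ_q(p₂)` for all `q ≥ 1`. -/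
theorem degree_distribution_stochastically_decreasing_in_p
    (N : ℕ) (hN : 1 ≤ N) (p₁ p₂ : ℝ)
    (hp₂ : 0 < p₂) (hpp : p₂ < p₁) (hp₁ : p₁ ≤ 1)
    (k₀ : ℕ) (hk₀ : 1 ≤ k₀) (hcond : (N : ℝ) * (2 - p₂) / (k₀ : ℝ) ≤ 1)
    (ρ₀ : Fin (N + 1) → ℝ) (hρ₀nn : ∀ i, 0 ≤ ρ₀ i) (hρ₀sum : ∑ i, ρ₀ i = 1)
    (ρseq : ℝ → ℕ → Fin (N + 1) → ℝ)
    (hinit : ∀ p, ρseq p 0 = ρ₀)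
    (hrec : ∀ p q, ρseq p (q + 1) =
      fun j => ∑ i, ρseq p q i * Hmat N (k₀ + q) p i j) :
    ∀ q : ℕ, 1 ≤ q → sdLE (ρseq p₁ q) (ρseq p₂ q) :=
  degree_distribution_stochastically_decreasing_in_p_general N p₁ p₂ hpp hp₁ k₀ hk₀ hcond ρ₀ hρ₀nn
    ρseq hinit hrec
end
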